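/- arXiv:2009.05425 — 2 statements merged into one kernel-verified Lean document; each statement's English description precedes it below -/
import Mathlib

section
/- If u : ℝ → ℂ is twice differentiable and satisfies both first-order invariants 2i(ū u' - u ū') - 3|u|⁴ - 4c|u|² = 4a and 2|u'|² - |u|⁶ - 2c|u|⁴ - 4(a+2b)|u|² = 8d (pointwise, with a,b,c,d ∈ ℝ), and satisfies u'' + i (|u|²u)' + 2ic u' - 4b u = 0, then the eight-degree polynomial P(λ) = [λ⁴ - λ²(c + |u|²/2) + b]² + λ² [λ²u + (i/2)u' - (1/2)u|u|² - cu][λ²ū - (i/2)ū' - (1/2)ū|u|² - cū] equals λ⁸ - 2cλ⁶ + (a+2b+c²)λ⁴ + (d - c(a+2b))λ² + b², for every λ ∈ ℂ (in particular P is independent of x). -/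
/-!
Expanding `P(λ)` in powers of `λ`, the coefficients of `λ⁸`, `λ⁶` and `λ⁰` are already constant,
while the coefficients of `λ⁴` and `λ²` are polynomials in `u, ū, u', ū'` which the two
first integrals reduce to `a + 2b + c²` and `d - c(a + 2b)`.
-/

open Complex

theorem spectral_poly_eq_of_first_integrals {z zb w wb a b c d : ℂ}
    (h₁ : 2 * I * (zb * w - z * wb) - 3 * (z * zb) ^ 2 - 4 * c * (z * zb) = 4 * a)
    (h₂ : 2 * (w * wb) - (z * zb) ^ 3 - 2 * c * (z * zb) ^ 2 - 4 * (a + 2 * b) * (z * zb)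
      = 8 * d)
    (l : ℂ) :
    (l ^ 4 - l ^ 2 * (c + z * zb / 2) + b) ^ 2
      + l ^ 2 * (l ^ 2 * z + I / 2 * w - 1 / 2 * z * (z * zb) - c * z)
        * (l ^ 2 * zb - I / 2 * wb - 1 / 2 * zb * (z * zb) - c * zb)
      = l ^ 8 - 2 * c * l ^ 6 + (a + 2 * b + c ^ 2) * l ^ 4
        + (d - c * (a + 2 * b)) * l ^ 2 + b ^ 2 := by
  linear_combination (l ^ 4 / 4 - l ^ 2 / 4 * (z * zb / 2 + c)) * h₁ + l ^ 2 / 8 * h₂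
    - l ^ 2 / 4 * w * wb * I_sq

theorem stmt_8_general (u : ℝ → ℂ) (a b c d : ℝ)
    (hinv1 : ∀ x, 2 * Complex.I * ((starRingEnd ℂ) (u x) * deriv u x
        - u x * (starRingEnd ℂ) (deriv u x))
      - 3 * (u x * (starRingEnd ℂ) (u x)) ^ 2
      - 4 * (c : ℂ) * (u x * (starRingEnd ℂ) (u x)) = 4 * (a : ℂ))
    (hinv2 : ∀ x, 2 * (deriv u x * (starRingEnd ℂ) (deriv u x))
      - (u x * (starRingEnd ℂ) (u x)) ^ 3
      - 2 * (c : ℂ) * (u x * (starRingEnd ℂ) (u x)) ^ 2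
      - 4 * ((a : ℂ) + 2 * (b : ℂ)) * (u x * (starRingEnd ℂ) (u x)) = 8 * (d : ℂ)) :
    ∀ (x : ℝ) (l : ℂ),
      (l ^ 4 - l ^ 2 * ((c : ℂ) + (u x * (starRingEnd ℂ) (u x)) / 2) + (b : ℂ)) ^ 2
      + l ^ 2 * (l ^ 2 * u x + (Complex.I / 2) * deriv u x
          - (1 / 2) * u x * (u x * (starRingEnd ℂ) (u x)) - (c : ℂ) * u x)
        * (l ^ 2 * (starRingEnd ℂ) (u x) - (Complex.I / 2) * (starRingEnd ℂ) (deriv u x)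
          - (1 / 2) * (starRingEnd ℂ) (u x) * (u x * (starRingEnd ℂ) (u x))
          - (c : ℂ) * (starRingEnd ℂ) (u x))
      = l ^ 8 - 2 * (c : ℂ) * l ^ 6 + ((a : ℂ) + 2 * (b : ℂ) + (c : ℂ) ^ 2) * l ^ 4
        + ((d : ℂ) - (c : ℂ) * ((a : ℂ) + 2 * (b : ℂ))) * l ^ 2 + (b : ℂ) ^ 2 :=
  fun x => spectral_poly_eq_of_first_integrals (hinv1 x) (hinv2 x)

theorem stmt_8 (u : ℝ → ℂ) (a b c d : ℝ)
    (hu : Differentiable ℝ u) (hu' : Differentiable ℝ (deriv u))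
    (hinv1 : ∀ x, 2 * Complex.I * ((starRingEnd ℂ) (u x) * deriv u x
        - u x * (starRingEnd ℂ) (deriv u x))
      - 3 * (u x * (starRingEnd ℂ) (u x)) ^ 2
      - 4 * (c : ℂ) * (u x * (starRingEnd ℂ) (u x)) = 4 * (a : ℂ))
    (hinv2 : ∀ x, 2 * (deriv u x * (starRingEnd ℂ) (deriv u x))
      - (u x * (starRingEnd ℂ) (u x)) ^ 3
      - 2 * (c : ℂ) * (u x * (starRingEnd ℂ) (u x)) ^ 2
      - 4 * ((a : ℂ) + 2 * (b : ℂ)) * (u x * (starRingEnd ℂ) (u x)) = 8 * (d : ℂ))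
    (hode : ∀ x, deriv (deriv u) x
      + Complex.I * deriv (fun y => (u y * (starRingEnd ℂ) (u y)) * u y) x
      + 2 * Complex.I * (c : ℂ) * deriv u x - 4 * (b : ℂ) * u x = 0) :
    ∀ (x : ℝ) (l : ℂ),
      (l ^ 4 - l ^ 2 * ((c : ℂ) + (u x * (starRingEnd ℂ) (u x)) / 2) + (b : ℂ)) ^ 2
      + l ^ 2 * (l ^ 2 * u x + (Complex.I / 2) * deriv u x
          - (1 / 2) * u x * (u x * (starRingEnd ℂ) (u x)) - (c : ℂ) * u x)
        * (l ^ 2 * (starRingEnd ℂ) (u x) - (Complex.I / 2) * (starRingEnd ℂ) (deriv u x)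
          - (1 / 2) * (starRingEnd ℂ) (u x) * (u x * (starRingEnd ℂ) (u x))
          - (c : ℂ) * (starRingEnd ℂ) (u x))
      = l ^ 8 - 2 * (c : ℂ) * l ^ 6 + ((a : ℂ) + 2 * (b : ℂ) + (c : ℂ) ^ 2) * l ^ 4
        + ((d : ℂ) - (c : ℂ) * ((a : ℂ) + 2 * (b : ℂ))) * l ^ 2 + (b : ℂ) ^ 2 :=
  stmt_8_general u a b c d hinv1 hinv2
end

section
/- Let R : ℝ → ℝ be differentiable with R > 0, let Θ : ℝ → ℝ be differentiable, and a, b, c, d ∈ ℝ. Suppose Θ' = -a/R² - (3/4)R² - c and 2(R')² + 2R²(Θ')² - R⁶ - 2cR⁴ - 4(a+2b)R² = 8d. Then R satisfies (R')² + a²/R² + (1/16)R⁶ + (c/2)R⁴ + (c² - 4b - a/2)R² + 2ac - 4d = 0. -/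
/-! Substituting the phase equation for `Θ'` into the energy invariant eliminates `Θ`; what remains,
halved, is the quadrature for `R`. -/

theorem sq_mul_sq_phase_speed {a c r : ℝ} (hr : r ≠ 0) :
    r ^ 2 * (-a / r ^ 2 - 3 / 4 * r ^ 2 - c) ^ 2
      = a ^ 2 / r ^ 2 + 9 / 16 * r ^ 6 + 3 / 2 * c * r ^ 4 + (c ^ 2 + 3 / 2 * a) * r ^ 2
        + 2 * a * c := by
  field_simp
  ring

theorem amplitude_quadrature_of_invariants {a b c d r p ω : ℝ} (hr : r ≠ 0)
    (hω : ω = -a / r ^ 2 - 3 / 4 * r ^ 2 - c)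
    (hE : 2 * p ^ 2 + 2 * r ^ 2 * ω ^ 2 - r ^ 6 - 2 * c * r ^ 4 - 4 * (a + 2 * b) * r ^ 2 = 8 * d) :
    p ^ 2 + a ^ 2 / r ^ 2 + 1 / 16 * r ^ 6 + c / 2 * r ^ 4 + (c ^ 2 - 4 * b - a / 2) * r ^ 2
      + 2 * a * c - 4 * d = 0 := by
  subst hω
  linear_combination (1 / 2) * hE - sq_mul_sq_phase_speed (a := a) (c := c) hr

theorem stmt_15_general (R Θ : ℝ → ℝ) (a b c d : ℝ)
    (hpos : ∀ x, 0 < R x)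
    (hΘ' : ∀ x, deriv Θ x = -a / (R x) ^ 2 - (3 / 4) * (R x) ^ 2 - c)
    (hinv : ∀ x, 2 * (deriv R x) ^ 2 + 2 * (R x) ^ 2 * (deriv Θ x) ^ 2
      - (R x) ^ 6 - 2 * c * (R x) ^ 4 - 4 * (a + 2 * b) * (R x) ^ 2 = 8 * d) :
    ∀ x, (deriv R x) ^ 2 + a ^ 2 / (R x) ^ 2 + (1 / 16) * (R x) ^ 6
      + (c / 2) * (R x) ^ 4 + (c ^ 2 - 4 * b - a / 2) * (R x) ^ 2
      + 2 * a * c - 4 * d = 0 := fun x =>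
  amplitude_quadrature_of_invariants (hpos x).ne' (hΘ' x) (hinv x)

theorem stmt_15 (R Θ : ℝ → ℝ) (a b c d : ℝ)
    (hRd : Differentiable ℝ R) (hΘd : Differentiable ℝ Θ)
    (hpos : ∀ x, 0 < R x)
    (hΘ' : ∀ x, deriv Θ x = -a / (R x) ^ 2 - (3 / 4) * (R x) ^ 2 - c)
    (hinv : ∀ x, 2 * (deriv R x) ^ 2 + 2 * (R x) ^ 2 * (deriv Θ x) ^ 2
      - (R x) ^ 6 - 2 * c * (R x) ^ 4 - 4 * (a + 2 * b) * (R x) ^ 2 = 8 * d) :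
    ∀ x, (deriv R x) ^ 2 + a ^ 2 / (R x) ^ 2 + (1 / 16) * (R x) ^ 6
      + (c / 2) * (R x) ^ 4 + (c ^ 2 - 4 * b - a / 2) * (R x) ^ 2
      + 2 * a * c - 4 * d = 0 :=
  stmt_15_general R Θ a b c d hpos hΘ' hinv
end
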